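/- Fix p ∈ ℕ, p ≥ 1, h = 1/p. Every operator A on L²(𝕋^N → ℂ^M) of the form (A u)(x) = Σ_{j ∈ (ℤ/pℤ)^N} A_j(x) u(x + h j), where each A_j : 𝕋^N → ℂ^{M×M} is a step function constant on each cube ∏_i [h p_i, h p_i + h), is determined by the matrix B_A = (A_{j−r}(y + h r))_{r,j ∈ (ℤ/pℤ)^N} ∈ ℂ^{Mp^N × Mp^N} (independent of y ∈ [0,h)^N), and the assignment A ↦ B_A satisfies B_{αA+βB} = α B_A + β B_B, B_{A∘B} = B_A · B_B, and B_{A*} = (B_A)*. -/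

import Mathlib

open MeasureTheory

noncomputable section

abbrev Torus (N : ℕ) := Fin N → AddCircle (1 : ℝ)

abbrev L2 (N M : ℕ) := Lp (EuclideanSpace ℂ (Fin M)) 2 (volume : Measure (Torus N))

/-- The canonical representative in `[0,1)` of a point of `𝕋 = ℝ/ℤ`. -/
def lift1 (x : AddCircle (1 : ℝ)) : ℝ := (AddCircle.equivIco 1 0 x : ℝ)

/-- The index (in `(ℤ/pℤ)^N`) of the cube `∏_i [h p_i, h p_i + h)`, `h = 1/p`,
containing the point `x ∈ 𝕋^N`. -/
def cubeIdx (N p : ℕ) [NeZero p] (x : Torus N) : Fin N → ZMod p :=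
  fun i => ((⌊lift1 (x i) * p⌋ : ℤ) : ZMod p)

/-- The shift vector `h j ∈ 𝕋^N` for `j ∈ (ℤ/pℤ)^N`, `h = 1/p`. -/
def hvec (N p : ℕ) [NeZero p] (j : Fin N → ZMod p) : Torus N :=
  fun i => ((((j i).val : ℝ) / p : ℝ) : AddCircle (1 : ℝ))

/-- The action of the finite-difference-type operator with cube-step coefficients:
`(A u)(x) = Σ_{j ∈ (ℤ/pℤ)^N} A_j(x) u(x + h j)`, where the step function `A_j` has the
constant value `C j r` on the cube indexed by `r`. -/
def opOf (N M p : ℕ) [NeZero p]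
    (C : (Fin N → ZMod p) → (Fin N → ZMod p) → Matrix (Fin M) (Fin M) ℂ)
    (u : Torus N → EuclideanSpace ℂ (Fin M)) : Torus N → EuclideanSpace ℂ (Fin M) :=
  fun x => ∑ j : Fin N → ZMod p,
    Matrix.toEuclideanCLM (𝕜 := ℂ) (C j (cubeIdx N p x)) (u (x + hvec N p j))

/-- The block matrix `B_A = (A_{j−r}(y + h r))_{r,j} ∈ ℂ^{Mp^N × Mp^N}` associated with the
coefficients `C` (the value `A_{j-r}(y + h r)` being the constant value of `A_{j-r}` on the
cube indexed by `r`). -/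
def Bmat (N M p : ℕ) [NeZero p]
    (C : (Fin N → ZMod p) → (Fin N → ZMod p) → Matrix (Fin M) (Fin M) ℂ) :
    Matrix ((Fin N → ZMod p) × Fin M) ((Fin N → ZMod p) × Fin M) ℂ :=
  fun rq jq => C (jq.1 - rq.1) rq.1 rq.2 jq.2

/-! Translating by `h j` moves the cube index by `j` (`cubeIdx_add_hvec`), so an operator with
cube-step coefficients is a finite sum of constant matrices on cubes composed with translations by
`h (ℤ/pℤ)^N`. Composing two such operators, or taking an adjoint (a change of variables in the
translation-invariant Haar integral), gives an operator of the same form whose coefficients are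
obtained by reindexing the shifts; in the block indexing `B_{r,j} = A_{j-r}(cube r)` these
reindexings are exactly the matrix product and the conjugate transpose. Since `B` determines the
coefficients, it determines the operator. -/

open scoped ENNReal

lemma MeasureTheory.MemLp.integrable_inner {α 𝕜 E : Type*} [MeasurableSpace α] {μ : Measure α}
    [RCLike 𝕜] [NormedAddCommGroup E] [InnerProductSpace 𝕜 E] {f g : α → E}
    (hf : MemLp f 2 μ) (hg : MemLp g 2 μ) : Integrable (fun x => (inner 𝕜 (f x) (g x) : 𝕜)) μ :=
  (L2.integrable_inner (hf.toLp f) (hg.toLp g)).congr <| by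
    filter_upwards [hf.coeFn_toLp, hg.coeFn_toLp] with x hfx hgx
    rw [hfx, hgx]

lemma Matrix.inner_toEuclideanCLM_left {n : Type*} [Fintype n] [DecidableEq n]
    (A : Matrix n n ℂ) (w z : EuclideanSpace ℂ n) :
    inner ℂ (Matrix.toEuclideanCLM (𝕜 := ℂ) A w) z
      = inner ℂ w (Matrix.toEuclideanCLM (𝕜 := ℂ) (star A) z) := by
  rw [map_star, ContinuousLinearMap.star_eq_adjoint, ContinuousLinearMap.adjoint_inner_right]

section Cubes

lemma lift1_coe (t : ℝ) : lift1 (t : AddCircle (1 : ℝ)) = Int.fract t := by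
  simp [lift1, AddCircle.coe_equivIco_mk_apply]

lemma coe_lift1 (z : AddCircle (1 : ℝ)) : ((lift1 z : ℝ) : AddCircle (1 : ℝ)) = z :=
  (AddCircle.equivIco 1 0).symm_apply_apply z

lemma intCast_floor_lift1_coe_mul {p : ℕ} (t : ℝ) :
    ((⌊lift1 (t : AddCircle (1 : ℝ)) * p⌋ : ℤ) : ZMod p) = ⌊t * p⌋ := by
  rw [lift1_coe, Int.fract, sub_mul, ← Int.cast_natCast, ← Int.cast_mul, Int.floor_sub_intCast]
  simp

variable {N p : ℕ} [NeZero p]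

lemma hvec_add (j k : Fin N → ZMod p) : hvec N p (j + k) = hvec N p j + hvec N p k := by
  funext i
  simp only [hvec, Pi.add_apply, ← ZMod.toAddCircle_apply, map_add]

lemma hvec_neg (j : Fin N → ZMod p) : hvec N p (-j) = -hvec N p j := by
  funext i
  simp only [hvec, Pi.neg_apply, ← ZMod.toAddCircle_apply, map_neg]

lemma cubeIdx_add_hvec (x : Torus N) (j : Fin N → ZMod p) :
    cubeIdx N p (x + hvec N p j) = cubeIdx N p x + j := by
  funext i
  have hp : (p : ℝ) ≠ 0 := Nat.cast_ne_zero.mpr (NeZero.ne p)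
  have hx : x i + hvec N p j i = ((lift1 (x i) + (j i).val / p : ℝ) : AddCircle (1 : ℝ)) := by
    rw [AddCircle.coe_add, coe_lift1]; rfl
  simp only [cubeIdx, Pi.add_apply]
  rw [hx, intCast_floor_lift1_coe_mul, add_mul, div_mul_cancel₀ _ hp, Int.floor_add_natCast]
  simp

lemma measurable_lift1 : Measurable lift1 :=
  measurable_subtype_coe.comp (AddCircle.measurableEquivIco (1 : ℝ) 0).measurable

lemma measurableSet_cubeIdx_eq (r : Fin N → ZMod p) :
    MeasurableSet {x : Torus N | cubeIdx N p x = r} := by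
  have h : {x : Torus N | cubeIdx N p x = r}
      = ⋂ i, (fun x : Torus N => ⌊lift1 (x i) * p⌋) ⁻¹' {n : ℤ | (n : ZMod p) = r i} := by
    ext x
    simp [cubeIdx, funext_iff]
  rw [h]
  exact .iInter fun i =>
    ((measurable_lift1.comp (measurable_pi_apply i)).mul_const _).floor trivial

end Cubes

abbrev StepCoeffs (N M p : ℕ) := (Fin N → ZMod p) → (Fin N → ZMod p) → Matrix (Fin M) (Fin M) ℂ

section Coeffs

variable {N M p : ℕ} [NeZero p]

/-- Collecting `A_j(x) B_k(x + h j) u(x + h (j + k))` at the total shift `l = j + k`. -/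
def compCoeff (CA CB : StepCoeffs N M p) : StepCoeffs N M p :=
  fun l r => ∑ j, CA j r * CB (l - j) (r + j)

/-- The adjoint of `u ↦ A(x) u(x + h j)` is `v ↦ A(x - h j)ᴴ v(x - h j)`. -/
def adjointCoeff (C : StepCoeffs N M p) : StepCoeffs N M p :=
  fun k r => star (C (-k) (r + k))

lemma Bmat_injective : Function.Injective (Bmat N M p) := by
  intro CA CB h
  funext j r
  ext q q'
  simpa [Bmat] using congrFun (congrFun h (r, q)) (j + r, q')

lemma Bmat_add (CA CB : StepCoeffs N M p) :
    Bmat N M p (CA + CB) = Bmat N M p CA + Bmat N M p CB :=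
  rfl

lemma Bmat_smul (c : ℂ) (C : StepCoeffs N M p) : Bmat N M p (c • C) = c • Bmat N M p C :=
  rfl

lemma Bmat_compCoeff (CA CB : StepCoeffs N M p) :
    Bmat N M p (compCoeff CA CB) = Bmat N M p CA * Bmat N M p CB := by
  ext ⟨r, q⟩ ⟨l, q'⟩
  simp only [Bmat, compCoeff, Matrix.mul_apply, Matrix.sum_apply, Fintype.sum_prod_type]
  refine Fintype.sum_equiv (Equiv.addLeft r) _ _ fun j => ?_
  simp only [Equiv.coe_addLeft, add_sub_cancel_left, sub_add_eq_sub_sub]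

lemma Bmat_adjointCoeff (C : StepCoeffs N M p) :
    Bmat N M p (adjointCoeff C) = star (Bmat N M p C) := by
  ext ⟨r, q⟩ ⟨j, q'⟩
  simp [Bmat, adjointCoeff, Matrix.star_apply]

end Coeffs

section StepOperators

variable {N M p : ℕ} [NeZero p]

lemma opOf_add (CA CB : StepCoeffs N M p) (u : Torus N → EuclideanSpace ℂ (Fin M)) :
    opOf N M p (CA + CB) u = opOf N M p CA u + opOf N M p CB u := by
  funext x
  simp only [opOf, Pi.add_apply, map_add, add_apply, Finset.sum_add_distrib]

lemma opOf_smul (c : ℂ) (C : StepCoeffs N M p) (u : Torus N → EuclideanSpace ℂ (Fin M)) :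
    opOf N M p (c • C) u = c • opOf N M p C u := by
  funext x
  simp only [opOf, Pi.smul_apply, _root_.map_smul, smul_apply,
    Finset.smul_sum]

lemma opOf_opOf (CA CB : StepCoeffs N M p) (u : Torus N → EuclideanSpace ℂ (Fin M)) :
    opOf N M p CA (opOf N M p CB u) = opOf N M p (compCoeff CA CB) u := by
  funext x
  set r := cubeIdx N p x
  calc ∑ j, Matrix.toEuclideanCLM (𝕜 := ℂ) (CA j r)
          (∑ k, Matrix.toEuclideanCLM (𝕜 := ℂ) (CB k (cubeIdx N p (x + hvec N p j)))
            (u (x + hvec N p j + hvec N p k)))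
      = ∑ j, ∑ k, Matrix.toEuclideanCLM (𝕜 := ℂ) (CA j r * CB k (r + j))
          (u (x + hvec N p (j + k))) := by
        simp only [map_sum, cubeIdx_add_hvec, add_assoc, ← hvec_add, map_mul,
          mul_apply_eq_comp, r]
    _ = ∑ j, ∑ l, Matrix.toEuclideanCLM (𝕜 := ℂ) (CA j r * CB (l - j) (r + j))
          (u (x + hvec N p l)) := by
        refine Finset.sum_congr rfl fun j _ => Fintype.sum_equiv (Equiv.addLeft j) _ _ fun k => ?_
        simp
    _ = ∑ l, Matrix.toEuclideanCLM (𝕜 := ℂ) (compCoeff CA CB l r) (u (x + hvec N p l)) := by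
        rw [Finset.sum_comm]
        simp only [compCoeff, map_sum, FunLike.coe_sum, Finset.sum_apply]

lemma opOf_congr_ae (C : StepCoeffs N M p) {u v : Torus N → EuclideanSpace ℂ (Fin M)}
    (h : u =ᵐ[volume] v) : opOf N M p C u =ᵐ[volume] opOf N M p C v := by
  have hshift : ∀ᵐ x ∂(volume : Measure (Torus N)), ∀ j, u (x + hvec N p j) = v (x + hvec N p j) :=
    ae_all_iff.mpr fun j =>
      (measurePreserving_add_right volume (hvec N p j)).quasiMeasurePreserving.ae_eq h
  filter_upwards [hshift] with x hx
  simp only [opOf, hx]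

lemma memLp_toEuclideanCLM_cubeIdx {q : ℝ≥0∞} {μ : Measure (Torus N)}
    (D : (Fin N → ZMod p) → Matrix (Fin M) (Fin M) ℂ) {w : Torus N → EuclideanSpace ℂ (Fin M)}
    (hw : MemLp w q μ) :
    MemLp (fun x => Matrix.toEuclideanCLM (𝕜 := ℂ) (D (cubeIdx N p x)) (w x)) q μ := by
  have hpiece : (fun x => Matrix.toEuclideanCLM (𝕜 := ℂ) (D (cubeIdx N p x)) (w x))
      = ∑ r, {x | cubeIdx N p x = r}.indicator
          (fun x => Matrix.toEuclideanCLM (𝕜 := ℂ) (D r) (w x)) := by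
    funext x
    rw [Finset.sum_apply, Finset.sum_eq_single (cubeIdx N p x)]
    · simp
    · intro r _ hr
      simp [Ne.symm hr]
    · simp
  rw [hpiece]
  exact memLp_finsetSum' _ fun r _ =>
    ((Matrix.toEuclideanCLM (𝕜 := ℂ) (D r)).comp_memLp' hw).indicator (measurableSet_cubeIdx_eq r)

lemma memLp_opOf {q : ℝ≥0∞} (C : StepCoeffs N M p) {u : Torus N → EuclideanSpace ℂ (Fin M)}
    (hu : MemLp u q volume) : MemLp (opOf N M p C u) q volume := by
  have := memLp_finsetSum' Finset.univ fun j _ => memLp_toEuclideanCLM_cubeIdx (C j)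
    (hu.comp_measurePreserving (measurePreserving_add_right volume (hvec N p j)))
  unfold opOf
  simpa only [Finset.sum_fn, Function.comp_def] using this

lemma integral_inner_shift_eq (C : StepCoeffs N M p) (k : Fin N → ZMod p)
    (u v : Torus N → EuclideanSpace ℂ (Fin M)) :
    ∫ x, inner ℂ (Matrix.toEuclideanCLM (𝕜 := ℂ) (C (-k) (cubeIdx N p x)) (v (x + hvec N p (-k))))
        (u x)
      = ∫ y, inner ℂ (v y)
          (Matrix.toEuclideanCLM (𝕜 := ℂ) (adjointCoeff C k (cubeIdx N p y))
            (u (y + hvec N p k))) := by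
  rw [← integral_add_right_eq_self _ (hvec N p k)]
  congr 1 with y
  rw [cubeIdx_add_hvec, hvec_neg, add_neg_cancel_right, Matrix.inner_toEuclideanCLM_left]
  rfl

lemma integral_inner_opOf_left (C : StepCoeffs N M p) {u v : Torus N → EuclideanSpace ℂ (Fin M)}
    (hu : MemLp u 2 volume) (hv : MemLp v 2 volume) :
    ∫ x, inner ℂ (opOf N M p C v x) (u x)
      = ∫ y, inner ℂ (v y) (opOf N M p (adjointCoeff C) u y) := by
  have hshift (w : Torus N → EuclideanSpace ℂ (Fin M)) (hw : MemLp w 2 volume) (j) :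
      MemLp (fun x => w (x + hvec N p j)) 2 volume :=
    hw.comp_measurePreserving (measurePreserving_add_right volume (hvec N p j))
  simp only [opOf, sum_inner, inner_sum]
  rw [integral_finsetSum _ fun j _ =>
      (memLp_toEuclideanCLM_cubeIdx (C j) (hshift v hv j)).integrable_inner hu,
    integral_finsetSum _ fun k _ =>
      hv.integrable_inner (memLp_toEuclideanCLM_cubeIdx _ (hshift u hu k))]
  rw [← Equiv.sum_comp (Equiv.neg _)]
  exact Finset.sum_congr rfl fun k _ => integral_inner_shift_eq C k u v

end StepOperators

def HasCoeffs {N M p : ℕ} [NeZero p] (O : L2 N M →L[ℂ] L2 N M) (C : StepCoeffs N M p) : Prop :=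
  ∀ u : L2 N M, (O u : Torus N → EuclideanSpace ℂ (Fin M)) =ᵐ[volume] opOf N M p C u

namespace HasCoeffs

variable {N M p : ℕ} [NeZero p] {OA OB : L2 N M →L[ℂ] L2 N M} {CA CB : StepCoeffs N M p}

lemma ext (hA : HasCoeffs OA CA) (hB : HasCoeffs OB CA) : OA = OB :=
  ContinuousLinearMap.ext fun u => Lp.ext ((hA u).trans (hB u).symm)

lemma add (hA : HasCoeffs OA CA) (hB : HasCoeffs OB CB) :
    HasCoeffs (OA + OB) (CA + CB) := fun u => by
  filter_upwards [Lp.coeFn_add (OA u) (OB u), hA u, hB u] with x hsum hAx hBx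
  rw [add_apply, hsum, opOf_add, Pi.add_apply, Pi.add_apply, hAx, hBx]

lemma smul (hA : HasCoeffs OA CA) (c : ℂ) : HasCoeffs (c • OA) (c • CA) := fun u => by
  filter_upwards [Lp.coeFn_smul c (OA u), hA u] with x hsmul hAx
  rw [smul_apply, hsmul, opOf_smul, Pi.smul_apply, Pi.smul_apply, hAx]

lemma comp (hA : HasCoeffs OA CA) (hB : HasCoeffs OB CB) :
    HasCoeffs (OA.comp OB) (compCoeff CA CB) := fun u =>
  ((hA (OB u)).trans (opOf_congr_ae CA (hB u))).trans (.of_eq (opOf_opOf CA CB u))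

lemma adjoint (hA : HasCoeffs OA CA) :
    HasCoeffs (ContinuousLinearMap.adjoint OA) (adjointCoeff CA) := fun u => by
  have hmem := memLp_opOf (adjointCoeff CA) (Lp.memLp u)
  suffices ContinuousLinearMap.adjoint OA u = hmem.toLp _ from this ▸ hmem.coeFn_toLp
  refine ext_inner_left ℂ fun v => ?_
  rw [ContinuousLinearMap.adjoint_inner_right, L2.inner_def, L2.inner_def]
  calc ∫ x, inner ℂ (OA v x) (u x)
      = ∫ x, inner ℂ (opOf N M p CA v x) (u x) :=
        integral_congr_ae <| (hA v).mono fun x hx => congrArg (inner ℂ · (u x)) hx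
    _ = ∫ x, inner ℂ (v x) (opOf N M p (adjointCoeff CA) u x) :=
        integral_inner_opOf_left CA (Lp.memLp u) (Lp.memLp v)
    _ = ∫ x, inner ℂ (v x) (hmem.toLp _ x) :=
        integral_congr_ae <| hmem.coeFn_toLp.mono fun x hx => congrArg (inner ℂ (v x)) hx.symm

end HasCoeffs

/-- Fix `p ≥ 1`, `h = 1/p`.  Every operator of the form
`(A u)(x) = Σ_j A_j(x) u(x + h j)` with cube-step coefficients is determined by the matrix
`B_A = (A_{j−r}(y + h r))_{r,j} ∈ ℂ^{Mp^N × Mp^N}`, and the assignment `A ↦ B_A` satisfies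
`B_{αA+βB} = α B_A + β B_B`, `B_{A∘B} = B_A · B_B` and `B_{A*} = (B_A)*`. -/
theorem stmt6 (N M p : ℕ) [NeZero p]
    (CA CB : (Fin N → ZMod p) → (Fin N → ZMod p) → Matrix (Fin M) (Fin M) ℂ)
    (OA OB : L2 N M →L[ℂ] L2 N M)
    (hA : ∀ u : L2 N M,
      (OA u : Torus N → EuclideanSpace ℂ (Fin M)) =ᵐ[volume] opOf N M p CA u)
    (hB : ∀ u : L2 N M,
      (OB u : Torus N → EuclideanSpace ℂ (Fin M)) =ᵐ[volume] opOf N M p CB u) :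
    (Bmat N M p CA = Bmat N M p CB → OA = OB) ∧
    (∀ α β : ℂ, ∃ C, (∀ u : L2 N M,
        ((α • OA + β • OB) u : Torus N → EuclideanSpace ℂ (Fin M)) =ᵐ[volume]
          opOf N M p C u) ∧
      Bmat N M p C = α • Bmat N M p CA + β • Bmat N M p CB) ∧
    (∃ C, (∀ u : L2 N M,
        ((OA.comp OB) u : Torus N → EuclideanSpace ℂ (Fin M)) =ᵐ[volume] opOf N M p C u) ∧
      Bmat N M p C = Bmat N M p CA * Bmat N M p CB) ∧
    (∃ C, (∀ u : L2 N M,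
        ((ContinuousLinearMap.adjoint OA) u : Torus N → EuclideanSpace ℂ (Fin M)) =ᵐ[volume]
          opOf N M p C u) ∧
      Bmat N M p C = star (Bmat N M p CA)) := by
  have hA' : HasCoeffs OA CA := hA
  have hB' : HasCoeffs OB CB := hB
  refine ⟨fun hBmat => hA'.ext (Bmat_injective hBmat ▸ hB'), fun α β => ?_,
    ⟨_, hA'.comp hB', Bmat_compCoeff CA CB⟩, ⟨_, hA'.adjoint, Bmat_adjointCoeff CA⟩⟩
  exact ⟨α • CA + β • CB, (hA'.smul α).add (hB'.smul β), by rw [Bmat_add, Bmat_smul, Bmat_smul]⟩
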